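/- arXiv:1104.1474 — 8 statements merged into one kernel-verified Lean document; each statement's English description precedes it below -/
import Mathlib

section
/- Let f(x,y) = ax² + 2hxy + cy² be a real binary quadratic form with discriminant D = 4h² - 4ac. If a > 0, b := f(1,1) > 0 (i.e. a + 2h + c > 0) and c < 0, then D ≥ 5s² where s = min(a, b, -c). -/
/-- For a real binary quadratic form `f(x,y) = a x² + 2 h x y + c y²` with
discriminant `D = 4h² - 4ac`, if `a > 0`, `b := f(1,1) = a + 2h + c > 0` and `c < 0`,
then `D ≥ 5 s²` where `s = min (a, b, -c)`. -/
theorem stmt0 (a h c : ℝ) (ha : 0 < a) (hb : 0 < a + 2*h + c) (hc : c < 0) :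
    4*h^2 - 4*a*c ≥ 5 * (min a (min (a + 2*h + c) (-c)))^2 := by
  set s := min a (min (a + 2*h + c) (-c)) with hs
  have h1 : s ≤ a := min_le_left _ _
  have h2 : s ≤ a + 2*h + c := le_trans (min_le_right _ _) (min_le_left _ _)
  have h3 : s ≤ -c := le_trans (min_le_right _ _) (min_le_right _ _)
  have h4 : 0 < s := lt_min ha (lt_min hb (by linarith))
  nlinarith [sq_nonneg (a + 2*h + c - s), sq_nonneg (a - s), sq_nonneg (c + s),
    sq_nonneg (a + h), sq_nonneg (h + c), mul_pos ha (neg_pos.mpr hc),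
    mul_nonneg (sub_nonneg.mpr h1) (sub_nonneg.mpr h3),
    mul_nonneg (sub_nonneg.mpr h2) (sub_nonneg.mpr h1),
    mul_nonneg (sub_nonneg.mpr h2) (sub_nonneg.mpr h3)]
end

section
/- Let k be an imaginary quadratic field and f a binary hermitian form over k that represents 1 (i.e. f(u) = 1 for some u ∈ k²) and has discriminant Δ = D(ac - N(ν)) computed in a basis starting with u. Then f is equivalent over k to the form N(x) - Δ·N(y) (the norm form of the quaternion algebra (D,Δ/ℚ)). -/
open ComplexConjugate

/-- A binary hermitian form over the imaginary quadratic field `k = ℚ(√D)` which represents `1`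
is equivalent over `k` to the norm form `N(x) - Δ N(y)` of the quaternion algebra `(D,Δ/ℚ)`,
where `Δ = D(ac - N(ν))` is the discriminant of `f`. -/
theorem stmt5 (D : ℤ) (hD : D < 0)
    (k : Set ℂ)
    (hk : k = {z : ℂ | ∃ p q : ℚ, z = (p:ℂ) + (q:ℂ) * (Complex.I * Real.sqrt (-D))})
    (a c : ℚ) (ν : ℂ) (hν : ν ∈ k)
    (f : ℂ → ℂ → ℂ)
    (hf : ∀ x y : ℂ, f x y = (a:ℂ)*x*conj x + conj ν*x*conj y + ν*conj x*y + (c:ℂ)*y*conj y)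
    (Δ : ℝ) (hΔ : Δ = (D:ℝ) * ((a:ℝ)*(c:ℝ) - Complex.normSq ν))
    (hrep : ∃ u₁ ∈ k, ∃ u₂ ∈ k, f u₁ u₂ = 1) :
    ∃ p ∈ k, ∃ q ∈ k, ∃ r ∈ k, ∃ s ∈ k, p*s - q*r ≠ 0 ∧
      ∀ x y : ℂ, f (p*x + q*y) (r*x + s*y) = x * conj x - (Δ:ℂ) * (y * conj y) := by
  have hDR : (D:ℝ) < 0 := by exact_mod_cast hD
  set w : ℂ := Complex.I * Real.sqrt (-(D:ℤ)) with hw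
  have hw2 : w * w = (D:ℂ) := by
    rw [hw]
    have h1 : (Real.sqrt (-(D:ℤ)) : ℂ) * (Real.sqrt (-(D:ℤ)) : ℂ) = ((-(D:ℤ) : ℝ) : ℂ) := by
      rw [← Complex.ofReal_mul, Real.mul_self_sqrt (by norm_num; linarith)]
    push_cast at h1 ⊢
    linear_combination (Complex.I^2) * h1 + (-(D:ℂ)) * Complex.I_sq
  have hcw : conj w = -w := by
    rw [hw]; simp [map_mul, Complex.conj_I, Complex.conj_ofReal]
  -- closure properties of k
  have hmem : ∀ z : ℂ, z ∈ k ↔ ∃ p q : ℚ, z = (p:ℂ) + (q:ℂ) * w := by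
    intro z; rw [hk]; simp [hw]
  have hkrat : ∀ r : ℚ, (r:ℂ) ∈ k := fun r => (hmem _).2 ⟨r, 0, by simp⟩
  have hkw : w ∈ k := (hmem w).2 ⟨0, 1, by simp⟩
  have hkadd : ∀ x ∈ k, ∀ y ∈ k, x + y ∈ k := by
    rintro x hx y hy
    obtain ⟨p, q, rfl⟩ := (hmem x).1 hx
    obtain ⟨p', q', rfl⟩ := (hmem y).1 hy
    exact (hmem _).2 ⟨p + p', q + q', by push_cast; ring⟩
  have hkneg : ∀ x ∈ k, -x ∈ k := by
    rintro x hx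
    obtain ⟨p, q, rfl⟩ := (hmem x).1 hx
    exact (hmem _).2 ⟨-p, -q, by push_cast; ring⟩
  have hksub : ∀ x ∈ k, ∀ y ∈ k, x - y ∈ k := by
    intro x hx y hy
    have := hkadd x hx (-y) (hkneg y hy)
    simpa [sub_eq_add_neg] using this
  have hkmul : ∀ x ∈ k, ∀ y ∈ k, x * y ∈ k := by
    rintro x hx y hy
    obtain ⟨p, q, rfl⟩ := (hmem x).1 hx
    obtain ⟨p', q', rfl⟩ := (hmem y).1 hy
    refine (hmem _).2 ⟨p * p' + q * q' * D, p * q' + q * p', ?_⟩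
    push_cast
    linear_combination (q:ℂ) * (q':ℂ) * hw2
  have hkconj : ∀ x ∈ k, conj x ∈ k := by
    rintro x hx
    obtain ⟨p, q, rfl⟩ := (hmem x).1 hx
    refine (hmem _).2 ⟨p, -q, ?_⟩
    push_cast
    simp [map_add, map_mul, hcw]
  have hkinv : ∀ x ∈ k, x⁻¹ ∈ k := by
    rintro x hx
    rcases eq_or_ne x 0 with rfl | hx0
    · simpa using hkrat 0
    obtain ⟨p, q, rfl⟩ := (hmem x).1 hx
    set n : ℚ := p^2 - q^2 * D with hn
    have hnc : ((n:ℚ):ℂ) = (p:ℂ)^2 - (q:ℂ)^2*(D:ℂ) := by push_cast [hn]; ring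
    have hxc : ((p:ℂ) + q * w) * ((p:ℂ) - q * w) = (n:ℂ) := by
      linear_combination (-(q:ℂ)^2) * hw2 - hnc
    have hn0 : (n:ℂ) ≠ 0 := by
      intro h
      rcases mul_eq_zero.1 (hxc.trans h) with h1 | h1
      · exact hx0 h1
      · have hcx : conj ((p:ℂ) + (q:ℂ) * w) = (p:ℂ) - q * w := by
          simp [map_add, map_mul, hcw]; ring
        exact hx0 (by simpa using (starRingEnd ℂ).injective (by rw [hcx, h1]; simp))
    refine (hmem _).2 ⟨p/n, -(q/n), ?_⟩
    rw [inv_eq_of_mul_eq_one_right (b := ((p/n:ℚ):ℂ) + ((-(q/n):ℚ):ℂ) * w) ?_]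
    push_cast
    field_simp
    linear_combination (-(q:ℂ)^2) * hw2 - hnc
  -- unpack the representation of 1
  obtain ⟨u₁, hu₁, u₂, hu₂, hu⟩ := hrep
  rw [hf] at hu
  -- abbreviations
  set L : ℂ := u₁ * conj u₁ + u₂ * conj u₂ with hLdef
  have hLk : L ∈ k := hkadd _ (hkmul _ hu₁ _ (hkconj _ hu₁)) _ (hkmul _ hu₂ _ (hkconj _ hu₂))
  have hLne : L ≠ 0 := by
    intro h
    have e : ((Complex.normSq u₁ + Complex.normSq u₂ : ℝ) : ℂ) = 0 := by
      push_cast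
      rw [← Complex.mul_conj, ← Complex.mul_conj]
      rw [hLdef] at h; exact h
    have e2 : Complex.normSq u₁ + Complex.normSq u₂ = 0 := by exact_mod_cast e
    have h1 : u₁ = 0 := Complex.normSq_eq_zero.mp
      (le_antisymm (by linarith [Complex.normSq_nonneg u₂]) (Complex.normSq_nonneg u₁))
    have h2 : u₂ = 0 := Complex.normSq_eq_zero.mp
      (le_antisymm (by linarith [Complex.normSq_nonneg u₁]) (Complex.normSq_nonneg u₂))
    rw [h1, h2] at hu
    simp at hu
  set b : ℂ := (c:ℂ)*conj u₁*conj u₂ - (a:ℂ)*conj u₁*conj u₂ + ν*(conj u₁*conj u₁)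
      - conj ν*(conj u₂*conj u₂) with hbdef
  have hbk : b ∈ k :=
    hksub _ (hkadd _ (hksub _ (hkmul _ (hkmul _ (hkrat c) _ (hkconj _ hu₁)) _ (hkconj _ hu₂))
        _ (hkmul _ (hkmul _ (hkrat a) _ (hkconj _ hu₁)) _ (hkconj _ hu₂)))
      _ (hkmul _ hν _ (hkmul _ (hkconj _ hu₁) _ (hkconj _ hu₁))))
      _ (hkmul _ (hkconj _ hν) _ (hkmul _ (hkconj _ hu₂) _ (hkconj _ hu₂)))
  set μ : ℂ := w * L⁻¹ with hμdef
  have hμk : μ ∈ k := hkmul _ hkw _ (hkinv _ hLk)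
  set q : ℂ := μ * (-(conj u₂) - b * u₁) with hqdef
  set s : ℂ := μ * (conj u₁ - b * u₂) with hsdef
  have hqk : q ∈ k := hkmul _ hμk _ (hksub _ (hkneg _ (hkconj _ hu₂)) _ (hkmul _ hbk _ hu₁))
  have hsk : s ∈ k := hkmul _ hμk _ (hksub _ (hkconj _ hu₁) _ (hkmul _ hbk _ hu₂))
  have hTL : L⁻¹ * L = 1 := inv_mul_cancel₀ hLne
  have hcL : conj (L⁻¹) = L⁻¹ := by
    rw [map_inv₀]
    congr 1
    rw [hLdef]
    simp [map_add, map_mul]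
    ring
  have hcb : conj b = (c:ℂ)*u₁*u₂ - (a:ℂ)*u₁*u₂ + conj ν*(u₁*u₁) - ν*(u₂*u₂) := by
    rw [hbdef]
    simp [map_add, map_mul, map_sub]
  have hcq : conj q = (-w * L⁻¹) * (-u₂ - conj b * conj u₁) := by
    rw [hqdef, hμdef]
    simp only [map_mul, map_sub, map_neg, Complex.conj_conj, hcL, hcw]
  have hcs : conj s = (-w * L⁻¹) * (u₁ - conj b * conj u₂) := by
    rw [hsdef, hμdef]
    simp only [map_mul, map_sub, Complex.conj_conj, hcL, hcw]
  have hΔc : (Δ:ℂ) = (D:ℂ) * ((a:ℂ)*(c:ℂ) - ν * conj ν) := by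
    rw [hΔ]
    push_cast
    rw [Complex.mul_conj]
  -- the four Gram identities
  have h1 : (a:ℂ)*u₁*conj u₁ + conj ν*u₁*conj u₂ + ν*conj u₁*u₂ + (c:ℂ)*u₂*conj u₂ = 1 := hu
  have h2 : (a:ℂ)*u₁*conj q + conj ν*u₁*conj s + ν*conj q*u₂ + (c:ℂ)*u₂*conj s = 0 := by
    rw [hcq, hcs, hcb]
    linear_combination (-((-w * L⁻¹) * ((c:ℂ)*u₁*u₂ - (a:ℂ)*u₁*u₂ + conj ν*(u₁*u₁) - ν*(u₂*u₂)))) * h1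
  have h3 : (a:ℂ)*q*conj u₁ + conj ν*q*conj u₂ + ν*conj u₁*s + (c:ℂ)*s*conj u₂ = 0 := by
    rw [hqdef, hsdef, hμdef, hbdef]
    linear_combination (-((w * L⁻¹) * ((c:ℂ)*conj u₁*conj u₂ - (a:ℂ)*conj u₁*conj u₂ + ν*(conj u₁*conj u₁) - conj ν*(conj u₂*conj u₂)))) * h1
  have hTL' : (u₁*conj u₁ + u₂*conj u₂)⁻¹ * (u₁*conj u₁ + u₂*conj u₂) = 1 := by
    rw [← hLdef]; exact hTL
  have h4 : (a:ℂ)*q*conj q + conj ν*q*conj s + ν*conj q*s + (c:ℂ)*s*conj s = -(Δ:ℂ) := by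
    rw [hcq, hcs, hcb, hqdef, hsdef, hμdef, hbdef, hΔc, hLdef]
    linear_combination (w*w*((u₁*conj u₁ + u₂*conj u₂)⁻¹)^2*(((a:ℂ)*u₂*conj u₂ - ν*conj u₁*u₂ - conj ν*u₁*conj u₂ + (c:ℂ)*u₁*conj u₁) - (((c:ℂ)-(a:ℂ))*conj u₁*conj u₂ + ν*(conj u₁)^2 - conj ν*(conj u₂)^2)*(((c:ℂ)-(a:ℂ))*u₁*u₂ + conj ν*u₁^2 - ν*u₂^2))) * h1 + (-(((a:ℂ)*(c:ℂ) - ν*conj ν)*((u₁*conj u₁ + u₂*conj u₂)⁻¹)^2*(u₁*conj u₁ + u₂*conj u₂)^2)) * hw2 + (-(((a:ℂ)*(c:ℂ) - ν*conj ν)*(D:ℂ)*((u₁*conj u₁ + u₂*conj u₂)⁻¹*(u₁*conj u₁ + u₂*conj u₂)+1))) * hTL'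
  refine ⟨u₁, hu₁, q, hqk, u₂, hu₂, s, hsk, ?_, ?_⟩
  · have hdet : u₁ * s - q * u₂ = w := by
      rw [hqdef, hsdef, hμdef, hLdef] at *
      linear_combination w * hTL
    rw [hdet]
    intro h
    rw [h, mul_zero] at hw2
    have : (D:ℂ) ≠ 0 := by exact_mod_cast (by omega : D ≠ 0)
    exact this hw2.symm
  · intro x y
    rw [hf]
    simp only [map_add, map_mul]
    linear_combination (x * conj x) * h1 + (x * conj y) * h2 + (conj x * y) * h3 + (y * conj y) * h4
end

section
/- Let A be the ring of integers of an imaginary quadratic field k. Let α = a/b and β = c/d with a,b,c,d ∈ A, let I = (a,b) and J = (c,d) be the ideals they generate. Then N(ad - bc) ≥ N(I)·N(J), with equality if and only if the ideal IJ is the principal ideal generated by ad - bc. -/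
set_option synthInstance.maxHeartbeats 1000000

/-- In the ring of integers `A` of an imaginary quadratic field, for `a, b, c, d ∈ A` with
`ad - bc ≠ 0`, the ideals `I = (a,b)` and `J = (c,d)` satisfy `N(ad-bc) ≥ N(I)·N(J)`,
with equality iff `IJ` is the principal ideal generated by `ad - bc`. -/
theorem stmt6 (K : Type*) [Field K] [NumberField K]
    (hdeg : Module.finrank ℚ K = 2)
    (himag : ∀ v : NumberField.InfinitePlace K, v.IsComplex)
    (a b c d : NumberField.RingOfIntegers K)
    (hne : a*d - b*c ≠ 0) :
    Ideal.absNorm (Ideal.span {a*d - b*c}) ≥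
      Ideal.absNorm (Ideal.span {a, b}) * Ideal.absNorm (Ideal.span {c, d}) ∧
    (Ideal.absNorm (Ideal.span {a*d - b*c}) =
        Ideal.absNorm (Ideal.span {a, b}) * Ideal.absNorm (Ideal.span {c, d}) ↔
      Ideal.span {a*d - b*c} = Ideal.span {a, b} * Ideal.span {c, d}) := by
  set I := Ideal.span ({a, b} : Set (NumberField.RingOfIntegers K))
  set J := Ideal.span ({c, d} : Set (NumberField.RingOfIntegers K))
  have ha : a ∈ I := Ideal.subset_span (by simp)
  have hb : b ∈ I := Ideal.subset_span (by simp)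
  have hc : c ∈ J := Ideal.subset_span (by simp)
  have hd : d ∈ J := Ideal.subset_span (by simp)
  have hmem : a*d - b*c ∈ I * J :=
    sub_mem (Ideal.mul_mem_mul ha hd) (Ideal.mul_mem_mul hb hc)
  have hle : Ideal.span {a*d - b*c} ≤ I * J :=
    (Ideal.span_singleton_le_iff_mem _).mpr hmem
  have hdvd : Ideal.absNorm (I * J) ∣ Ideal.absNorm (Ideal.span {a*d - b*c}) :=
    Ideal.absNorm_dvd_absNorm_of_le hle
  have hnz : Ideal.absNorm (Ideal.span {a*d - b*c}) ≠ 0 := by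
    rw [Ne, Ideal.absNorm_eq_zero_iff, Ideal.span_singleton_eq_bot]
    exact hne
  rw [_root_.map_mul Ideal.absNorm] at hdvd
  constructor
  · exact Nat.le_of_dvd (Nat.pos_of_ne_zero hnz) hdvd
  · constructor
    · intro heq
      -- I * J divides span, and norms equal; show equality of ideals
      have hdvd' : I * J ∣ Ideal.span {a*d - b*c} := Ideal.dvd_iff_le.mpr hle
      obtain ⟨C, hC⟩ := hdvd'
      have := congrArg Ideal.absNorm hC
      rw [_root_.map_mul Ideal.absNorm, _root_.map_mul Ideal.absNorm, heq] at this
      have hIJnz : Ideal.absNorm I * Ideal.absNorm J ≠ 0 := by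
        rw [← _root_.map_mul Ideal.absNorm, ← heq] at *
        exact hnz
      have hCone : Ideal.absNorm C = 1 := by
        have h1 := Nat.pos_of_ne_zero hIJnz
        nlinarith [this]
      rw [Ideal.absNorm_eq_one_iff] at hCone
      rw [hC, hCone, Ideal.mul_top]
    · intro heq
      rw [heq, _root_.map_mul Ideal.absNorm]
end

section
/- Let A = ℤ[i] be the Gaussian integers and f a hermitian form on A². If r, s ∈ A² span a submodule of A² of index 2, then 2f(r) + 2f(s) = Σ_{k=1}^{4} f((1+i)/2 · (r + i^k s)), where each vector (1+i)/2·(r + i^k s) lies in A². -/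
open ComplexConjugate


lemma my_pi_dvd_iff (z : GaussianInt) : (⟨1,1⟩ : GaussianInt) ∣ z ↔ (2:ℤ) ∣ z.re + z.im := by
  constructor
  · rintro ⟨w, rfl⟩
    simp [Zsqrtd.re_mul, Zsqrtd.im_mul]
    omega
  · rintro ⟨k, hk⟩
    exact ⟨⟨k, z.im - k⟩, by ext <;> simp [Zsqrtd.re_mul, Zsqrtd.im_mul] <;> omega⟩

lemma my_key (r s : GaussianInt × GaussianInt)
    (hr : IsCoprime r.1 r.2) (hs : IsCoprime s.1 s.2)
    (hindex : Nat.card ((GaussianInt × GaussianInt) ⧸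
      Submodule.span GaussianInt ({r, s} : Set (GaussianInt × GaussianInt))) = 2) :
    (⟨1,1⟩ : GaussianInt) ∣ (r.1 + s.1) ∧ (⟨1,1⟩ : GaussianInt) ∣ (r.2 + s.2) := by
  set M := Submodule.span GaussianInt ({r, s} : Set (GaussianInt × GaussianInt)) with hM
  have hrM : r ∈ M := Submodule.subset_span (by simp)
  have hsM : s ∈ M := Submodule.subset_span (by simp)
  have h2 : ∀ x : GaussianInt × GaussianInt, x + x ∈ M := by
    intro x
    have h0 := card_nsmul_eq_zero' (x := Submodule.Quotient.mk (p := M) x)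
    rw [hindex, two_nsmul] at h0
    have h1 : Submodule.Quotient.mk (p := M) (x + x) = 0 := by
      rw [Submodule.Quotient.mk_add]; exact h0
    exact (Submodule.Quotient.mk_eq_zero M).mp h1
  -- coprimality: not both components divisible
  have hcop : ∀ t : GaussianInt × GaussianInt, IsCoprime t.1 t.2 →
      ¬((2:ℤ) ∣ (t.1.re + t.1.im) ∧ (2:ℤ) ∣ (t.2.re + t.2.im)) := by
    rintro t ⟨u, v, huv⟩ ⟨h1, h2⟩
    have d1 := (my_pi_dvd_iff t.1).mpr h1
    have d2 := (my_pi_dvd_iff t.2).mpr h2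
    have : (⟨1,1⟩ : GaussianInt) ∣ 1 := huv ▸ dvd_add (Dvd.dvd.mul_left d1 u) (Dvd.dvd.mul_left d2 v)
    rw [my_pi_dvd_iff] at this
    norm_num at this
  by_contra hcon
  rw [my_pi_dvd_iff, my_pi_dvd_iff] at hcon
  have hrs1 : (r + s).1.re + (r + s).1.im = (r.1.re + r.1.im) + (s.1.re + s.1.im) := by
    simp [Zsqrtd.re_add, Zsqrtd.im_add]; ring
  have hrs2 : (r + s).2.re + (r + s).2.im = (r.2.re + r.2.im) + (s.2.re + s.2.im) := by
    simp [Zsqrtd.re_add, Zsqrtd.im_add]; ring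
  have hadd1 : (r.1 + s.1).re + (r.1 + s.1).im = (r.1.re + r.1.im) + (s.1.re + s.1.im) := by
    simp [Zsqrtd.re_add, Zsqrtd.im_add]; ring
  have hadd2 : (r.2 + s.2).re + (r.2 + s.2).im = (r.2.re + r.2.im) + (s.2.re + s.2.im) := by
    simp [Zsqrtd.re_add, Zsqrtd.im_add]; ring
  rw [hadd1, hadd2] at hcon
  have hr' := hcop r hr
  have hs' := hcop s hs
  -- find elements of M with parity (1,0) and (0,1)
  have hA : ∃ t ∈ M, ¬(2:ℤ) ∣ (t.1.re + t.1.im) ∧ (2:ℤ) ∣ (t.2.re + t.2.im) := by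
    by_cases h1 : (2:ℤ) ∣ (r.1.re + r.1.im) <;> by_cases h2 : (2:ℤ) ∣ (r.2.re + r.2.im) <;>
      by_cases h3 : (2:ℤ) ∣ (s.1.re + s.1.im) <;> by_cases h4 : (2:ℤ) ∣ (s.2.re + s.2.im) <;>
      first
      | exact ⟨r, hrM, by omega, by omega⟩
      | exact ⟨s, hsM, by omega, by omega⟩
      | exact ⟨r + s, M.add_mem hrM hsM, by rw [hrs1]; omega, by rw [hrs2]; omega⟩
  have hB : ∃ t ∈ M, (2:ℤ) ∣ (t.1.re + t.1.im) ∧ ¬(2:ℤ) ∣ (t.2.re + t.2.im) := by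
    by_cases h1 : (2:ℤ) ∣ (r.1.re + r.1.im) <;> by_cases h2 : (2:ℤ) ∣ (r.2.re + r.2.im) <;>
      by_cases h3 : (2:ℤ) ∣ (s.1.re + s.1.im) <;> by_cases h4 : (2:ℤ) ∣ (s.2.re + s.2.im) <;>
      first
      | exact ⟨r, hrM, by omega, by omega⟩
      | exact ⟨s, hsM, by omega, by omega⟩
      | exact ⟨r + s, M.add_mem hrM hsM, by rw [hrs1]; omega, by rw [hrs2]; omega⟩
  obtain ⟨t, htM, ht1, ht2⟩ := hA
  obtain ⟨t', ht'M, ht'1, ht'2⟩ := hB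
  have hit : ∀ v : GaussianInt × GaussianInt, ∃ u ∈ M,
      (⟨1,1⟩ : GaussianInt) ∣ (v.1 - u.1) ∧ (⟨1,1⟩ : GaussianInt) ∣ (v.2 - u.2) := by
    intro v
    by_cases hv1 : (2:ℤ) ∣ (v.1.re + v.1.im) <;> by_cases hv2 : (2:ℤ) ∣ (v.2.re + v.2.im)
    · exact ⟨0, M.zero_mem, by rw [my_pi_dvd_iff]; simp [Zsqrtd.re_sub, Zsqrtd.im_sub]; omega,
        by rw [my_pi_dvd_iff]; simp [Zsqrtd.re_sub, Zsqrtd.im_sub]; omega⟩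
    · exact ⟨t', ht'M, by rw [my_pi_dvd_iff]; simp [Zsqrtd.re_sub, Zsqrtd.im_sub]; omega,
        by rw [my_pi_dvd_iff]; simp [Zsqrtd.re_sub, Zsqrtd.im_sub]; omega⟩
    · exact ⟨t, htM, by rw [my_pi_dvd_iff]; simp [Zsqrtd.re_sub, Zsqrtd.im_sub]; omega,
        by rw [my_pi_dvd_iff]; simp [Zsqrtd.re_sub, Zsqrtd.im_sub]; omega⟩
    · refine ⟨t + t', M.add_mem htM ht'M, ?_, ?_⟩ <;>
        rw [my_pi_dvd_iff] <;>
        simp [Zsqrtd.re_sub, Zsqrtd.im_sub, Zsqrtd.re_add, Zsqrtd.im_add] <;> omega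
  have hmem : ∀ v : GaussianInt × GaussianInt, v ∈ M := by
    intro v
    obtain ⟨u, huM, ⟨w1, hw1⟩, ⟨w2, hw2⟩⟩ := hit v
    obtain ⟨u', hu'M, ⟨w1', hw1'⟩, ⟨w2', hw2'⟩⟩ := hit (w1, w2)
    have hvq : v = u + (⟨1,1⟩ : GaussianInt) • u' +
        ((⟨0,1⟩ : GaussianInt) • (w1', w2') + (⟨0,1⟩ : GaussianInt) • (w1', w2')) := by
      have e1 : v.1 = u.1 + (⟨1,1⟩:GaussianInt) * u'.1 + (⟨0,1⟩:GaussianInt) * w1' +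
          (⟨0,1⟩:GaussianInt) * w1' := by
        have hpi : (⟨1,1⟩:GaussianInt) * ⟨1,1⟩ = ⟨0,1⟩ + ⟨0,1⟩ := by
          ext <;> simp [Zsqrtd.re_mul, Zsqrtd.im_mul, Zsqrtd.re_add, Zsqrtd.im_add]
        have := hw1' -- w1 - u'.1 = π * w1'
        linear_combination hw1 + (⟨1,1⟩:GaussianInt) * hw1' + w1' * hpi
      have e2 : v.2 = u.2 + (⟨1,1⟩:GaussianInt) * u'.2 + (⟨0,1⟩:GaussianInt) * w2' +
          (⟨0,1⟩:GaussianInt) * w2' := by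
        have hpi : (⟨1,1⟩:GaussianInt) * ⟨1,1⟩ = ⟨0,1⟩ + ⟨0,1⟩ := by
          ext <;> simp [Zsqrtd.re_mul, Zsqrtd.im_mul, Zsqrtd.re_add, Zsqrtd.im_add]
        linear_combination hw2 + (⟨1,1⟩:GaussianInt) * hw2' + w2' * hpi
      apply Prod.ext <;> simp [smul_eq_mul] <;> [exact e1.trans (by ring); exact e2.trans (by ring)]
    rw [hvq]
    exact M.add_mem (M.add_mem huM (M.smul_mem _ hu'M)) (h2 _)
  have hMt : M = ⊤ := Submodule.eq_top_iff'.mpr hmem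
  rw [hMt] at hindex
  have : Subsingleton ((GaussianInt × GaussianInt) ⧸
      (⊤ : Submodule GaussianInt (GaussianInt × GaussianInt))) :=
    Submodule.Quotient.subsingleton_iff.mpr rfl
  rw [Nat.card_of_subsingleton (0 : _ ⧸ _)] at hindex
  omega


lemma my_comp_ex (x y g : GaussianInt) (k : ℕ) (h : x + ⟨0,1⟩^k * y = ⟨1,1⟩ * g) :
    GaussianInt.toComplex (⟨0,1⟩ * g) =
      (1+Complex.I)/2 * (GaussianInt.toComplex x + Complex.I^k * GaussianInt.toComplex y) := by
  have e : GaussianInt.toComplex x + Complex.I^k * GaussianInt.toComplex y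
      = (1+Complex.I) * GaussianInt.toComplex g := by
    have h' := congrArg GaussianInt.toComplex h
    simpa [map_add, map_mul, map_pow, GaussianInt.toComplex_def'] using h'
  rw [map_mul, show GaussianInt.toComplex ⟨0,1⟩ = Complex.I by
    simp [GaussianInt.toComplex_def']]
  linear_combination (-(1+Complex.I)/2) * e + (-(GaussianInt.toComplex g)/2) * Complex.I_sq

lemma my_branch (r s : GaussianInt × GaussianInt) (k : ℕ) (c : GaussianInt)
    (hik : (⟨0,1⟩:GaussianInt)^k = 1 + ⟨1,1⟩*c)
    (m1 m2 : GaussianInt) (hm1 : r.1 + s.1 = ⟨1,1⟩*m1) (hm2 : r.2 + s.2 = ⟨1,1⟩*m2) :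
    ∃ g : GaussianInt × GaussianInt,
      ((GaussianInt.toComplex g.1 : ℂ), (GaussianInt.toComplex g.2 : ℂ)) =
        ((1+Complex.I)/2) • ((GaussianInt.toComplex r.1, GaussianInt.toComplex r.2)
          + (Complex.I ^ k) • (GaussianInt.toComplex s.1, GaussianInt.toComplex s.2)) := by
  have h1 : r.1 + (⟨0,1⟩:GaussianInt)^k * s.1 = ⟨1,1⟩ * (m1 + c*s.1) := by
    linear_combination hm1 + s.1 * hik
  have h2 : r.2 + (⟨0,1⟩:GaussianInt)^k * s.2 = ⟨1,1⟩ * (m2 + c*s.2) := by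
    linear_combination hm2 + s.2 * hik
  refine ⟨(⟨0,1⟩ * (m1 + c*s.1), ⟨0,1⟩ * (m2 + c*s.2)), ?_⟩
  simp only [Prod.smul_mk, Prod.mk_add_mk, smul_eq_mul, Prod.mk.injEq]
  exact ⟨my_comp_ex r.1 s.1 _ k h1, my_comp_ex r.2 s.2 _ k h2⟩

/-- Cube relation over the Gaussian integers `A = ℤ[i]`: if primitive vectors `r, s ∈ A²`
span an `A`-submodule of `A²` of index 2, then each vector `(1+i)/2 · (r + iᵏ s)` lies in
`A²` and `2 f(r) + 2 f(s) = ∑_{k=1}^{4} f((1+i)/2 · (r + iᵏ s))` for any hermitian form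
`f(x,y) = a N(x) + ν̄ x ȳ + ν x̄ y + c N(y)` over `ℚ(i)`. -/
theorem stmt7 (a c : ℚ) (ν : ℂ) (f : ℂ × ℂ → ℂ)
    (hf : ∀ w : ℂ × ℂ, f w = (a:ℂ)*w.1*conj w.1 + conj ν*w.1*conj w.2
      + ν*conj w.1*w.2 + (c:ℂ)*w.2*conj w.2)
    (r s : GaussianInt × GaussianInt)
    (hr : IsCoprime r.1 r.2) (hs : IsCoprime s.1 s.2)
    (hindex : Nat.card ((GaussianInt × GaussianInt) ⧸
      Submodule.span GaussianInt ({r, s} : Set (GaussianInt × GaussianInt))) = 2)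
    (R S : ℂ × ℂ)
    (hR : R = (GaussianInt.toComplex r.1, GaussianInt.toComplex r.2))
    (hS : S = (GaussianInt.toComplex s.1, GaussianInt.toComplex s.2)) :
    (∀ k : ℕ, 1 ≤ k → k ≤ 4 → ∃ g : GaussianInt × GaussianInt,
        ((GaussianInt.toComplex g.1 : ℂ), (GaussianInt.toComplex g.2 : ℂ)) =
          ((1+Complex.I)/2) • (R + (Complex.I ^ k) • S)) ∧
    2 * f R + 2 * f S =
      ∑ k ∈ Finset.range 4, f (((1+Complex.I)/2) • (R + (Complex.I ^ (k+1)) • S)) := by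
  constructor
  · intro k hk1 hk4
    obtain ⟨⟨m1, hm1⟩, ⟨m2, hm2⟩⟩ := my_key r s hr hs hindex
    rw [hR, hS]
    interval_cases k
    · exact my_branch r s 1 ⟨0,1⟩ (by decide) m1 m2 hm1 hm2
    · exact my_branch r s 2 ⟨-1,1⟩ (by decide) m1 m2 hm1 hm2
    · exact my_branch r s 3 ⟨-1,0⟩ (by decide) m1 m2 hm1 hm2
    · exact my_branch r s 4 0 (by decide) m1 m2 hm1 hm2
  · have hpar : ∀ u v : ℂ × ℂ, f (u + v) + f (u - v) = 2 * f u + 2 * f v := by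
      intro u v
      simp only [hf, Prod.fst_add, Prod.snd_add, Prod.fst_sub, Prod.snd_sub, map_add, map_sub]
      ring
    have hscale : ∀ (t : ℂ) (u : ℂ × ℂ), f (t • u) = (t * conj t) * f u := by
      intro t u
      simp only [hf, Prod.smul_fst, Prod.smul_snd, smul_eq_mul, map_mul]
      ring
    have hlam : ((1+Complex.I)/2) * conj ((1+Complex.I)/2) = 1/2 := by
      simp only [map_div₀, map_add, map_one, map_ofNat, Complex.conj_I]
      linear_combination (-(1:ℂ)/4) * Complex.I_mul_I
    have hI : Complex.I * conj Complex.I = 1 := by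
      rw [Complex.conj_I]
      simpa using Complex.I_mul_I
    have h2 : Complex.I ^ 2 = -1 := Complex.I_sq
    have h3 : Complex.I ^ 3 = -Complex.I := by
      rw [pow_succ, h2]; ring
    have h4 : Complex.I ^ 4 = 1 := by
      rw [pow_succ, h3]; simpa using Complex.I_mul_I
    rw [Finset.sum_range_succ, Finset.sum_range_succ, Finset.sum_range_succ,
      Finset.sum_range_succ, Finset.sum_range_zero]
    simp only [Nat.reduceAdd, pow_one, h2, h3, h4, neg_smul, one_smul, ← sub_eq_add_neg]
    rw [hscale, hscale, hscale, hscale, hlam]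
    have e1 := hpar R S
    have e2 := hpar R (Complex.I • S)
    have e3 : f (Complex.I • S) = f S := by rw [hscale, hI, one_mul]
    rw [e3] at e2
    linear_combination (-1/2 : ℂ) * e1 + (-1/2 : ℂ) * e2
end

section
/- Let ρ = e^{2πi/6} and A = ℤ[ρ] be the Eisenstein integers. Let f be a hermitian form over ℚ(ρ), and let u, v ∈ ℚ(ρ)² with values a = f(u), b = f(v), c = f(u+v), d = f(u+ρv). Set α = b+c+d-2a, β = a+c+d-2b, γ = a+b+d-2c, δ = a+b+c-2d. Then for all x, y: 3·f(xu + yv) = β N(x) + α N(y) + γ N(x-y) + δ N(ρx - y). -/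
open ComplexConjugate

/-- Eisenstein representation formula: with `ρ = e^{2πi/6}`, a hermitian form `f` over
`ℚ(√-3)`, values `a = f(u)`, `b = f(v)`, `c = f(u+v)`, `d = f(u+ρv)` and
`α = b+c+d-2a`, `β = a+c+d-2b`, `γ = a+b+d-2c`, `δ = a+b+c-2d`, one has
`3 f(xu+yv) = β N(x) + α N(y) + γ N(x-y) + δ N(ρx-y)`. -/
theorem stmt11 (ρ : ℂ) (hρ : ρ = Complex.exp (2 * (Real.pi : ℂ) * Complex.I / 6))
    (a₀ c₀ : ℚ) (ν : ℂ) (f : ℂ × ℂ → ℂ)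
    (hf : ∀ w : ℂ × ℂ, f w = (a₀:ℂ)*w.1*conj w.1 + conj ν*w.1*conj w.2
      + ν*conj w.1*w.2 + (c₀:ℂ)*w.2*conj w.2)
    (u v : ℂ × ℂ) (a b c d α β γ δ : ℂ)
    (ha : a = f u) (hb : b = f v) (hc : c = f (u + v)) (hd : d = f (u + ρ • v))
    (hα : α = b + c + d - 2*a) (hβ : β = a + c + d - 2*b)
    (hγ : γ = a + b + d - 2*c) (hδ : δ = a + b + c - 2*d) :
    ∀ x y : ℂ, 3 * f (x • u + y • v) =
      β * (x * conj x) + α * (y * conj y) + γ * ((x - y) * conj (x - y))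
        + δ * ((ρ*x - y) * conj (ρ*x - y)) := by
  have h3 : ((Real.sqrt 3 : ℝ) : ℂ)^2 = 3 := by
    norm_cast
    rw [Real.sq_sqrt] <;> norm_num
  have hval : ρ = (1/2 : ℂ) + ((Real.sqrt 3 : ℝ) : ℂ)/2 * Complex.I := by
    rw [hρ, show (2*(Real.pi:ℂ)*Complex.I/6) = ((Real.pi/3 : ℝ):ℂ)*Complex.I by
      push_cast; ring, Complex.exp_mul_I, ← Complex.ofReal_cos, ← Complex.ofReal_sin,
      Real.cos_pi_div_three, Real.sin_pi_div_three]
    push_cast; ring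
  have hconj : conj ρ = 1 - ρ := by
    rw [hval]
    simp only [map_add, map_mul, map_div₀, Complex.conj_I, Complex.conj_ofReal, map_one,
      map_ofNat]
    ring
  have hquad : ρ^2 = ρ - 1 := by
    rw [hval]
    linear_combination (Complex.I^2/4) * h3 + (3/4 : ℂ) * Complex.I_sq
  intro x y
  subst hα hβ hγ hδ ha hb hc hd
  simp only [hf, Prod.fst_add, Prod.snd_add, Prod.smul_fst, Prod.smul_snd, smul_eq_mul,
    map_add, map_mul, map_sub, hconj]
  linear_combination ((1:ℂ)*v.2*(conj v.2)*(conj x)*y*(c₀:ℂ) + (-1:ℂ)*v.2*(conj v.2)*x*(conj y)*(c₀:ℂ) + (2:ℂ)*v.2*(conj v.2)*x*(conj x)*(c₀:ℂ) + (1:ℂ)*v.2*(conj v.1)*(conj x)*y*ν + (-1:ℂ)*v.2*(conj v.1)*x*(conj y)*ν + (2:ℂ)*v.2*(conj v.1)*x*(conj x)*ν + (1:ℂ)*v.1*(conj v.2)*(conj x)*y*(conj ν) + (-1:ℂ)*v.1*(conj v.2)*x*(conj y)*(conj ν) + (2:ℂ)*v.1*(conj v.2)*x*(conj x)*(conj ν)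 + (1:ℂ)*v.1*(conj v.1)*(conj x)*y*(a₀:ℂ) + (-1:ℂ)*v.1*(conj v.1)*x*(conj y)*(a₀:ℂ) + (2:ℂ)*v.1*(conj v.1)*x*(conj x)*(a₀:ℂ) + (2:ℂ)*(conj u.2)*v.2*(conj x)*y*(c₀:ℂ) + (-2:ℂ)*(conj u.2)*v.2*x*(conj y)*(c₀:ℂ) + (1:ℂ)*(conj u.2)*v.2*x*(conj x)*(c₀:ℂ) + (2:ℂ)*(conj u.2)*v.1*(conj x)*y*(conj ν) + (-2:ℂ)*(conj u.2)*v.1*x*(conj y)*(conj ν) + (1:ℂ)*(conj u.2)*v.1*x*(conj x)*(conj ν) + (2:ℂ)*(conj u.1)*v.2*(conj x)*y*ν + (-2:ℂ)*(conj u.1)*v.2*x*(conj y)*ν + (1:ℂ)*(conj u.1)*v.2*x*(conj x)*ν + (2:ℂ)*(conj u.1)*v.1*(conj x)*y*(a₀:ℂ) + (-2:ℂ)*(conj u.1)*v.1*x*(conj y)*(a₀:ℂ) + (1:ℂ)*(conj u.1)*v.1*x*(conj x)*(a₀:ℂ) + (-2:ℂ)*u.2*(conj v.2)*(conj x)*y*(c₀:ℂ)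 + (2:ℂ)*u.2*(conj v.2)*x*(conj y)*(c₀:ℂ) + (-1:ℂ)*u.2*(conj v.2)*x*(conj x)*(c₀:ℂ) + (-2:ℂ)*u.2*(conj v.1)*(conj x)*y*ν + (2:ℂ)*u.2*(conj v.1)*x*(conj y)*ν + (-1:ℂ)*u.2*(conj v.1)*x*(conj x)*ν + (-2:ℂ)*u.1*(conj v.2)*(conj x)*y*(conj ν) + (2:ℂ)*u.1*(conj v.2)*x*(conj y)*(conj ν) + (-1:ℂ)*u.1*(conj v.2)*x*(conj x)*(conj ν) + (-2:ℂ)*u.1*(conj v.1)*(conj x)*y*(a₀:ℂ) + (2:ℂ)*u.1*(conj v.1)*x*(conj y)*(a₀:ℂ) + (-1:ℂ)*u.1*(conj v.1)*x*(conj x)*(a₀:ℂ) + (-2:ℂ)*ρ*v.2*(conj v.2)*(conj x)*y*(c₀:ℂ) + (2:ℂ)*ρ*v.2*(conj v.2)*x*(conj y)*(c₀:ℂ) + (-2:ℂ)*ρ*v.2*(conj v.2)*x*(conj x)*(c₀:ℂ) + (-2:ℂ)*ρ*v.2*(conj v.1)*(conj x)*y*ν + (2:ℂ)*ρ*v.2*(conj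 v.1)*x*(conj y)*ν + (-2:ℂ)*ρ*v.2*(conj v.1)*x*(conj x)*ν + (-2:ℂ)*ρ*v.1*(conj v.2)*(conj x)*y*(conj ν) + (2:ℂ)*ρ*v.1*(conj v.2)*x*(conj y)*(conj ν) + (-2:ℂ)*ρ*v.1*(conj v.2)*x*(conj x)*(conj ν) + (-2:ℂ)*ρ*v.1*(conj v.1)*(conj x)*y*(a₀:ℂ) + (2:ℂ)*ρ*v.1*(conj v.1)*x*(conj y)*(a₀:ℂ) + (-2:ℂ)*ρ*v.1*(conj v.1)*x*(conj x)*(a₀:ℂ) + (-2:ℂ)*ρ*(conj u.2)*v.2*x*(conj x)*(c₀:ℂ) + (-2:ℂ)*ρ*(conj u.2)*v.1*x*(conj x)*(conj ν) + (-2:ℂ)*ρ*(conj u.1)*v.2*x*(conj x)*ν + (-2:ℂ)*ρ*(conj u.1)*v.1*x*(conj x)*(a₀:ℂ) + (2:ℂ)*ρ*u.2*(conj v.2)*x*(conj x)*(c₀:ℂ) + (2:ℂ)*ρ*u.2*(conj v.1)*x*(conj x)*ν + (2:ℂ)*ρ*u.1*(conj v.2)*x*(conj x)*(conj ν) + (2:ℂ)*ρ*u.1*(conj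 v.1)*x*(conj x)*(a₀:ℂ) + (2:ℂ)*ρ*ρ*v.2*(conj v.2)*x*(conj x)*(c₀:ℂ) + (2:ℂ)*ρ*ρ*v.2*(conj v.1)*x*(conj x)*ν + (2:ℂ)*ρ*ρ*v.1*(conj v.2)*x*(conj x)*(conj ν) + (2:ℂ)*ρ*ρ*v.1*(conj v.1)*x*(conj x)*(a₀:ℂ)) * hquad
end

section
/- Let ρ = e^{2πi/6} and f a hermitian form over ℚ(√-3). Then for any u, v: f(u+v) + f(u+ρ²v) = f(u) + f(v) + f(u+ρv). -/
open ComplexConjugate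

/-- Climbing lemma for the spine over `ℚ(√-3)`: with `ρ = e^{2πi/6}` (so `1 + ρ² = ρ`),
any hermitian form satisfies `f(u+v) + f(u+ρ²v) = f(u) + f(v) + f(u+ρv)`. -/
theorem stmt13 (ρ : ℂ) (hρ : ρ = Complex.exp (2 * (Real.pi : ℂ) * Complex.I / 6))
    (a c : ℚ) (ν : ℂ) (f : ℂ × ℂ → ℂ)
    (hf : ∀ w : ℂ × ℂ, f w = (a:ℂ)*w.1*conj w.1 + conj ν*w.1*conj w.2
      + ν*conj w.1*w.2 + (c:ℂ)*w.2*conj w.2)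
    (u v : ℂ × ℂ) :
    f (u + v) + f (u + (ρ^2) • v) = f u + f v + f (u + ρ • v) := by
  have hval : ρ = (Real.cos (Real.pi / 3) : ℂ) + (Real.sin (Real.pi / 3) : ℂ) * Complex.I := by
    rw [hρ]
    have : 2 * (Real.pi : ℂ) * Complex.I / 6 = ((Real.pi / 3 : ℝ) : ℂ) * Complex.I := by
      push_cast; ring
    rw [this, Complex.exp_mul_I, ← Complex.ofReal_cos, ← Complex.ofReal_sin]
  have hcos : Real.cos (Real.pi / 3) = 1 / 2 := by
    rw [Real.cos_pi_div_three]
  have hsin : Real.sin (Real.pi / 3) = Real.sqrt 3 / 2 := Real.sin_pi_div_three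
  have hval' : ρ = (1 / 2 : ℂ) + ((Real.sqrt 3 / 2 : ℝ) : ℂ) * Complex.I := by
    rw [hval, hcos, hsin]; push_cast; ring
  have hs : ((Real.sqrt 3 : ℝ) : ℂ) ^ 2 = 3 := by
    rw [← Complex.ofReal_pow, Real.sq_sqrt (by norm_num : (3:ℝ) ≥ 0)]; norm_num
  have hρ2 : ρ ^ 2 = ρ - 1 := by
    rw [hval']
    push_cast
    have hI : Complex.I ^ 2 = -1 := Complex.I_sq
    linear_combination (Complex.I ^ 2 / 4) * hs + (3 / 4 : ℂ) * hI
  have hc : conj ρ = 1 - ρ := by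
    rw [hval']
    simp [Complex.conj_I, map_add, map_mul, map_div₀, map_ofNat, map_one,
      Complex.conj_ofReal]
    ring
  simp only [hf, Prod.fst_add, Prod.snd_add, Prod.smul_fst, Prod.smul_snd, smul_eq_mul,
    map_add, map_mul, map_pow]
  set u1 := u.1; set u2 := u.2; set v1 := v.1; set v2 := v.2
  linear_combination
    ((a:ℂ)*v1*conj u1 + conj ν*v1*conj u2 + ν*conj u1*v2 + (c:ℂ)*v2*conj u2
      + (a:ℂ)*u1*conj v1 + conj ν*u1*conj v2 + ν*conj v1*u2 + (c:ℂ)*u2*conj v2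
      - ρ*conj ρ*((a:ℂ)*v1*conj v1 + conj ν*v1*conj v2 + ν*conj v1*v2 + (c:ℂ)*v2*conj v2)) * hρ2
    + (ρ^2*conj ρ*((a:ℂ)*v1*conj v1 + conj ν*v1*conj v2 + ν*conj v1*v2 + (c:ℂ)*v2*conj v2)
      + (conj ρ - ρ)*((a:ℂ)*u1*conj v1 + conj ν*u1*conj v2 + ν*conj v1*u2 + (c:ℂ)*u2*conj v2)) * hc
end

section
/- Let a, b, c, d be integers with a, b > 0, c, d < 0, and Δ := a²+b²+c²+d²-ab-ac-ad-bc-bd-cd = 6. Then a = b = 1 and c = d = -1. -/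
/-- Classification of indefinite integral hermitian forms of discriminant `6` over the
Eisenstein integers: if `a, b > 0`, `c, d < 0` are integers with
`a²+b²+c²+d²-ab-ac-ad-bc-bd-cd = 6`, then `a = b = 1` and `c = d = -1`. -/
theorem stmt17 (a b c d : ℤ) (ha : 0 < a) (hb : 0 < b) (hc : c < 0) (hd : d < 0)
    (hΔ : a^2 + b^2 + c^2 + d^2 - a*b - a*c - a*d - b*c - b*d - c*d = 6) :
    a = 1 ∧ b = 1 ∧ c = -1 ∧ d = -1 := by
  have ha1 : 1 ≤ a := ha
  have hb1 : 1 ≤ b := hb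
  have hc1 : c ≤ -1 := by omega
  have hd1 : d ≤ -1 := by omega
  have p1 : 1 ≤ a * b := by nlinarith
  have p2 : 1 ≤ a * (-c) := by nlinarith
  have p3 : 1 ≤ a * (-d) := by nlinarith
  have p4 : 1 ≤ b * (-c) := by nlinarith
  have p5 : 1 ≤ b * (-d) := by nlinarith
  have p6 : 1 ≤ c * d := by nlinarith
  have key : (a - b)^2 + (c - d)^2 =
      6 - (a*b + a*(-c) + a*(-d) + b*(-c) + b*(-d) + c*d) := by
    linear_combination hΔ
  have s1 : 0 ≤ (a - b)^2 := sq_nonneg _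
  have s2 : 0 ≤ (c - d)^2 := sq_nonneg _
  have q1 : (a - b)^2 = 0 := by linarith
  have q2 : (c - d)^2 = 0 := by linarith
  have hab : a = b := by have := pow_eq_zero_iff (n := 2) (by norm_num) |>.mp q1; omega
  have hcd : c = d := by have := pow_eq_zero_iff (n := 2) (by norm_num) |>.mp q2; omega
  have hab1 : a * b = 1 := by linarith
  have hcd1 : c * d = 1 := by linarith
  have haa : a * a = 1 := by rw [← hab] at hab1; exact hab1
  have hcc : c * c = 1 := by rw [← hcd] at hcd1; exact hcd1
  have ha' : a = 1 := by nlinarith [sq_nonneg (a - 1)]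
  have hc' : c = -1 := by nlinarith [sq_nonneg (c + 1)]
  exact ⟨ha', hab ▸ ha', hc', hcd ▸ hc'⟩
end

section
/- Let A = ℤ[ρ] be the Eisenstein integers (ρ = e^{2πi/6}) and f a hermitian form on ℚ(√-3)². Suppose at a vertex corresponding to the ultrabasis {u, v, u+v, u+ρv} the values satisfy α := f(v)+f(u+v)+f(u+ρv)-2f(u) > 0, β := f(u)+f(u+v)+f(u+ρv)-2f(v) > 0, γ > 0, δ > 0 (analogously defined). Then for every w = xu + yv with x, y ∈ A and w not an A×-multiple of u, v, u+v, or u+ρv, one has f(w) > max(f(u), f(v), f(u+v), f(u+ρv)). -/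
open ComplexConjugate

set_option maxHeartbeats 1000000 in
/-- A well with strict inequalities is a strict minimum: over the Eisenstein integers
`A = ℤ[ρ]`, `ρ = e^{2πi/6}`, let `f` be a hermitian form and `u, v` give the ultrabasis
`{u, v, u+v, u+ρv}` with `α, β, γ, δ > 0`.  Then for every primitive (lax) vector
`w = xu + yv` with `x, y ∈ A` which is not an `Aˣ`-multiple of `u`, `v`, `u+v` or `u+ρv`,
one has `f(w) > max(f(u), f(v), f(u+v), f(u+ρv))`. -/
theorem stmt19 (ρ : ℂ) (hρ : ρ = Complex.exp (2 * (Real.pi : ℂ) * Complex.I / 6))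
    (E : Set ℂ) (hE : E = {z : ℂ | ∃ m n : ℤ, z = (m:ℂ) + (n:ℂ) * ρ})
    (a₀ c₀ : ℚ) (ν : ℂ) (f : ℂ × ℂ → ℂ)
    (hf : ∀ w : ℂ × ℂ, f w = (a₀:ℂ)*w.1*conj w.1 + conj ν*w.1*conj w.2
      + ν*conj w.1*w.2 + (c₀:ℂ)*w.2*conj w.2)
    (u v : ℂ × ℂ)
    (hα : 0 < (f v + f (u + v) + f (u + ρ • v) - 2 * f u).re)
    (hβ : 0 < (f u + f (u + v) + f (u + ρ • v) - 2 * f v).re)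
    (hγ : 0 < (f u + f v + f (u + ρ • v) - 2 * f (u + v)).re)
    (hδ : 0 < (f u + f v + f (u + v) - 2 * f (u + ρ • v)).re)
    (x y : ℂ) (hx : x ∈ E) (hy : y ∈ E)
    (hcop : ∃ p ∈ E, ∃ q ∈ E, p*x + q*y = 1)
    (hunit : ∀ ζ : ℂ, ζ^6 = 1 →
      (x, y) ≠ (ζ, 0) ∧ (x, y) ≠ (0, ζ) ∧ (x, y) ≠ (ζ, ζ) ∧ (x, y) ≠ (ζ, ζ*ρ)) :
    (f (x • u + y • v)).re >
      max (max (f u).re (f v).re) (max (f (u + v)).re (f (u + ρ • v)).re) := by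
  have hr : Real.sqrt 3 ^ 2 = 3 := Real.sq_sqrt (by norm_num)
  set r : ℝ := Real.sqrt 3 with hrdef
  -- explicit value of ρ
  have hρ'' : ρ = Complex.cos (↑(Real.pi/3)) + Complex.sin (↑(Real.pi/3)) * Complex.I := by
    rw [hρ, ← Complex.exp_mul_I]
    congr 1
    push_cast
    ring
  have hρre : ρ.re = 1/2 := by
    rw [hρ'']
    simp only [Complex.add_re, Complex.mul_re, Complex.I_re, Complex.I_im,
      Complex.cos_ofReal_re, Complex.sin_ofReal_im, Complex.sin_ofReal_re,
      Complex.cos_ofReal_im, Real.cos_pi_div_three]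
    ring
  have hρim : ρ.im = r/2 := by
    rw [hρ'']
    simp only [Complex.add_im, Complex.mul_im, Complex.I_re, Complex.I_im,
      Complex.cos_ofReal_im, Complex.sin_ofReal_re, Complex.sin_ofReal_im,
      Complex.cos_ofReal_re, Real.sin_pi_div_three]
    ring
  have hρ2 : ρ^2 = ρ - 1 := by
    apply Complex.ext
    · simp only [pow_two, Complex.mul_re, Complex.sub_re, Complex.one_re, hρre, hρim]
      linear_combination (-1/4 : ℝ) * hr
    · simp only [pow_two, Complex.mul_im, Complex.sub_im, Complex.one_im, hρre, hρim]
      ring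
  have hρ3 : ρ^3 = -1 := by linear_combination (ρ + 1) * hρ2
  have hρ6 : ρ^6 = 1 := by linear_combination (ρ^3 - 1) * hρ3
  have hNρ1 : Complex.normSq ρ = 1 := by
    rw [Complex.normSq_apply, hρre, hρim]
    linear_combination (1/4 : ℝ) * hr
  have hmem : ∀ z : ℂ, z ∈ E ↔ ∃ m n : ℤ, z = (m:ℂ) + (n:ℂ) * ρ := fun z => by
    rw [hE]; exact Iff.rfl
  -- norm of an Eisenstein integer
  have nsq : ∀ m n : ℤ, Complex.normSq ((m:ℂ) + (n:ℂ)*ρ) = ((m^2 + m*n + n^2 : ℤ) : ℝ) := by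
    intro m n
    rw [Complex.normSq_apply]
    simp only [Complex.add_re, Complex.add_im, Complex.mul_re, Complex.mul_im,
      Complex.intCast_re, Complex.intCast_im, hρre, hρim]
    push_cast
    linear_combination ((n:ℝ)^2/4) * hr
  have normE : ∀ z ∈ E, z ≠ 0 → 1 ≤ Complex.normSq z := by
    intro z hz hz0
    obtain ⟨m, n, rfl⟩ := (hmem z).mp hz
    rw [nsq]
    have hmn : ¬(m = 0 ∧ n = 0) := by
      rintro ⟨rfl, rfl⟩; simp at hz0
    have hk0 : 0 < m^2 + m*n + n^2 := by
      rcases eq_or_ne n 0 with hn | hn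
      · subst hn
        have hm : m ≠ 0 := fun h => hmn ⟨h, rfl⟩
        rcases hm.lt_or_gt with h | h <;> nlinarith
      · have h1 : 1 ≤ n^2 := by rcases hn.lt_or_gt with h | h <;> nlinarith
        nlinarith [sq_nonneg (2*m + n)]
    have hk : 1 ≤ m^2 + m*n + n^2 := hk0
    exact_mod_cast hk
  -- units of the Eisenstein integers are 6th roots of unity
  have unitE : ∀ z, z ∈ E → (∃ p, p ∈ E ∧ p * z = 1) → z^6 = 1 := by
    intro z hz ⟨p, hp, hpz⟩
    have hz0 : z ≠ 0 := by rintro rfl; simp at hpz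
    have hp0 : p ≠ 0 := by rintro rfl; simp at hpz
    have h1 : Complex.normSq p * Complex.normSq z = 1 := by
      rw [← map_mul, hpz, map_one]
    have h2 := normE p hp hp0
    have h3 := normE z hz hz0
    have h4 : Complex.normSq z = 1 := by nlinarith
    obtain ⟨m, n, rfl⟩ := (hmem z).mp hz
    rw [nsq] at h4
    have hk : m^2 + m*n + n^2 = 1 := by exact_mod_cast h4
    have hb1 : -1 ≤ n := by nlinarith [sq_nonneg (2*m + n), sq_nonneg (n+2), sq_nonneg (n-2)]
    have hb2 : n ≤ 1 := by nlinarith [sq_nonneg (2*m + n), sq_nonneg (n+2), sq_nonneg (n-2)]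
    have hb3 : -1 ≤ m := by nlinarith [sq_nonneg (m + 2*n), sq_nonneg (m+2), sq_nonneg (m-2)]
    have hb4 : m ≤ 1 := by nlinarith [sq_nonneg (m + 2*n), sq_nonneg (m+2), sq_nonneg (m-2)]
    interval_cases m <;> interval_cases n <;> push_cast
    · norm_num at hk
    · norm_num
    · rw [show ((-1:ℂ) + 1*ρ) = ρ^2 by linear_combination -hρ2,
        show ((ρ:ℂ)^2)^6 = (ρ^6)^2 by ring, hρ6]; norm_num
    · rw [show ((0:ℂ) + (-1)*ρ)^6 = ρ^6 by ring, hρ6]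
    · norm_num at hk
    · rw [show ((0:ℂ) + 1*ρ)^6 = ρ^6 by ring, hρ6]
    · rw [show ((1:ℂ) + (-1)*ρ) = -ρ^2 by linear_combination hρ2,
        show ((-(ρ:ℂ)^2))^6 = (ρ^6)^2 by ring, hρ6]; norm_num
    · norm_num
    · norm_num at hk
  -- closure properties of E
  have addE : ∀ a ∈ E, ∀ b ∈ E, a + b ∈ E := by
    intro a ha b hb
    obtain ⟨m1, n1, rfl⟩ := (hmem a).mp ha
    obtain ⟨m2, n2, rfl⟩ := (hmem b).mp hb
    exact (hmem _).mpr ⟨m1 + m2, n1 + n2, by push_cast; ring⟩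
  have subE : ∀ a ∈ E, ∀ b ∈ E, a - b ∈ E := by
    intro a ha b hb
    obtain ⟨m1, n1, rfl⟩ := (hmem a).mp ha
    obtain ⟨m2, n2, rfl⟩ := (hmem b).mp hb
    exact (hmem _).mpr ⟨m1 - m2, n1 - n2, by push_cast; ring⟩
  have mulρE : ∀ a ∈ E, a * ρ ∈ E := by
    intro a ha
    obtain ⟨m, n, rfl⟩ := (hmem a).mp ha
    exact (hmem _).mpr ⟨-n, m + n, by push_cast; linear_combination (n:ℂ) * hρ2⟩
  obtain ⟨p, hp, q, hq, hpq⟩ := hcop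
  -- the four degenerate cases are excluded
  have hx0 : x ≠ 0 := by
    intro h
    have h6 := unitE y hy ⟨q, hq, by rw [h, mul_zero, zero_add] at hpq; exact hpq⟩
    exact (hunit y h6).2.1 (by rw [h])
  have hy0 : y ≠ 0 := by
    intro h
    have h6 := unitE x hx ⟨p, hp, by rw [h, mul_zero, add_zero] at hpq; exact hpq⟩
    exact (hunit x h6).1 (by rw [h])
  have hxy0 : x - y ≠ 0 := by
    intro h
    have hxy : x = y := sub_eq_zero.mp h
    have h6 := unitE x hx ⟨p + q, addE p hp q hq, by linear_combination hpq + q * hxy⟩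
    exact (hunit x h6).2.2.1 (by rw [hxy])
  have hρxy0 : ρ * x - y ≠ 0 := by
    intro h
    have hxy : ρ * x = y := sub_eq_zero.mp h
    have h6 := unitE x hx ⟨p + q * ρ, addE p hp (q*ρ) (mulρE q hq),
      by linear_combination hpq + q * hxy⟩
    exact (hunit x h6).2.2.2 (by rw [mul_comm x ρ, hxy])
  -- the four norms are at least 1
  have hNx : 1 ≤ Complex.normSq x := normE x hx hx0
  have hNy : 1 ≤ Complex.normSq y := normE y hy hy0
  have hNxy : 1 ≤ Complex.normSq (x - y) := normE _ (subE x hx y hy) hxy0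
  have hNρxy : 1 ≤ Complex.normSq (ρ*x - y) := by
    refine normE _ ?_ hρxy0
    have h1 : x * ρ - y ∈ E := subE _ (mulρE x hx) y hy
    rwa [mul_comm x ρ] at h1
  -- the structure of f on the lattice spanned by u, v
  set S : ℂ := (a₀:ℂ)*u.1*conj v.1 + conj ν*u.1*conj v.2 + ν*conj v.1*u.2
      + (c₀:ℂ)*u.2*conj v.2 with hS
  have Cval : ∀ b c : ℂ, f (b • u + c • v)
      = b*conj b * f u + c*conj c * f v + (b*conj c) * S + (conj b * c) * conj S := by
    intro b c
    simp only [hf, hS, Prod.fst_add, Prod.snd_add, Prod.smul_fst, Prod.smul_snd,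
      smul_eq_mul, map_add, map_mul, map_ratCast, Complex.conj_conj]
    ring
  have Fval : ∀ b c : ℂ, (f (b • u + c • v)).re
      = Complex.normSq b * (f u).re + Complex.normSq c * (f v).re
        + 2*((b*conj c).re * S.re - (b*conj c).im * S.im) := by
    intro b c
    rw [Cval b c, Complex.mul_conj, Complex.mul_conj]
    simp only [Complex.add_re, Complex.mul_re, Complex.mul_im, Complex.ofReal_re,
      Complex.ofReal_im, Complex.conj_re, Complex.conj_im]
    ring
  have hP : (f (u + v)).re = (f u).re + (f v).re + 2*S.re := by
    have h := Fval 1 1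
    rw [one_smul, one_smul] at h
    rw [h]
    simp only [Complex.normSq_one, map_one, mul_one, Complex.one_re, Complex.one_im]
    ring
  have hQ : (f (u + ρ • v)).re = (f u).re + (f v).re + S.re + r*S.im := by
    have h := Fval 1 ρ
    rw [one_smul] at h
    rw [h]
    simp only [Complex.normSq_one, one_mul, Complex.conj_re, Complex.conj_im, hρre, hρim,
      hNρ1]
    ring
  -- rewrite the positivity hypotheses
  simp only [Complex.add_re, Complex.sub_re, Complex.mul_re, Complex.re_ofNat,
    Complex.im_ofNat, zero_mul, sub_zero] at hα hβ hγ hδ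
  rw [hP, hQ] at hα hβ hγ hδ
  -- norm expansions
  have hN3e : Complex.normSq (x - y)
      = Complex.normSq x + Complex.normSq y - 2*(x*conj y).re := by
    simp only [Complex.normSq_apply, Complex.sub_re, Complex.sub_im, Complex.mul_re,
      Complex.mul_im, Complex.conj_re, Complex.conj_im]
    ring
  have hN4e : Complex.normSq (ρ*x - y)
      = Complex.normSq x + Complex.normSq y - (x*conj y).re + r*(x*conj y).im := by
    simp only [Complex.normSq_apply, Complex.sub_re, Complex.sub_im, Complex.mul_re,
      Complex.mul_im, Complex.conj_re, Complex.conj_im, hρre, hρim]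
    linear_combination ((x.re^2 + x.im^2)/4) * hr
  -- the key identity
  have key : 3 * (f (x • u + y • v)).re
      = (3*(f u).re + 3*S.re + r*S.im) * Complex.normSq x
        + (3*(f v).re + 3*S.re + r*S.im) * Complex.normSq y
        + (r*S.im - 3*S.re) * Complex.normSq (x - y)
        + (-(2*r*S.im)) * Complex.normSq (ρ*x - y) := by
    rw [Fval x y, hN3e, hN4e]
    linear_combination (2*S.im*(x*conj y).im) * hr
  -- positivity products
  have pβ : 0 ≤ (3*(f u).re + 3*S.re + r*S.im) * (Complex.normSq x - 1) :=
    mul_nonneg (by linarith) (by linarith)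
  have pα : 0 ≤ (3*(f v).re + 3*S.re + r*S.im) * (Complex.normSq y - 1) :=
    mul_nonneg (by linarith) (by linarith)
  have pγ : 0 ≤ (r*S.im - 3*S.re) * (Complex.normSq (x - y) - 1) :=
    mul_nonneg (by linarith) (by linarith)
  have pδ : 0 ≤ (-(2*r*S.im)) * (Complex.normSq (ρ*x - y) - 1) :=
    mul_nonneg (by linarith) (by linarith)
  rw [hP, hQ]
  exact max_lt (max_lt (by linarith) (by linarith)) (max_lt (by linarith) (by linarith))
end
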